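/- The Model 2 Markov chain on a finite connected graph with M ≥ 1 dollars is irreducible on the state space 𝒜_{N,M}. -/

import Mathlib

/-- The result of moving one dollar from `x` to `y` in configuration `ξ`
(nothing happens if `ξ x = 0`). -/
def moveDollar {V : Type*} [DecidableEq V] (ξ : V → ℕ) (x y : V) : V → ℕ :=
  fun z => if ξ x = 0 then ξ z
    else ξ z - (if z = x then 1 else 0) + (if z = y then 1 else 0)

/-- The state space `𝒜_{N,M}` of configurations with `M` dollars, as a finite set. -/
def stateSpace (V : Type*) [Fintype V] [DecidableEq V] (M : ℕ) : Finset (V → ℕ) :=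
  (Fintype.piFinset fun _ : V => Finset.range (M + 1)).filter fun ξ => ∑ x, ξ x = M

/-- Model 2 transition probabilities: `p(ξ, ξ^{→xy}) = ξ(x)/(M·deg(x))` for each
oriented edge `(x,y)`. -/
def pTwo {V : Type*} [Fintype V] [DecidableEq V] (G : SimpleGraph V) [DecidableRel G.Adj]
    (M : ℕ) (ξ ξ' : V → ℕ) : ℚ :=
  ∑ e ∈ Finset.univ.filter (fun e : V × V => G.Adj e.1 e.2 ∧ moveDollar ξ e.1 e.2 = ξ'),
    (ξ e.1 : ℚ) / ((M : ℚ) * (G.degree e.1 : ℚ))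

/-- `t`-step transition probabilities of Model 2. -/
def pTwoIter {V : Type*} [Fintype V] [DecidableEq V] (G : SimpleGraph V)
    [DecidableRel G.Adj] (M : ℕ) : ℕ → (V → ℕ) → (V → ℕ) → ℚ
  | 0, ξ, ξ' => if ξ = ξ' then 1 else 0
  | t + 1, ξ, ξ' => ∑ η ∈ stateSpace V M, pTwoIter G M t ξ η * pTwo G M η ξ'

/-! Moving one dollar from `x` to a neighbour has positive probability as soon as `x` holds a
dollar, so a dollar can be carried along any walk of `G`. If `ξ ≠ ξ'` have the same total, some
vertex `a` has a surplus and some `b` a deficit with respect to `ξ'`; carrying one dollar from `a`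
to `b` lowers the total surplus `∑ z, (ξ z - ξ' z)` by one, and induction on it joins `ξ` to
`ξ'`. -/

open Finset Relation

theorem exists_lt_of_sum_eq_of_ne {ι : Type*} [Fintype ι] {f g : ι → ℕ}
    (hsum : ∑ i, f i = ∑ i, g i) (hne : f ≠ g) : ∃ i, f i < g i := by
  by_contra! hle
  exact hne <| funext fun i =>
    ((sum_eq_sum_iff_of_le fun i _ => hle i).1 hsum.symm i (mem_univ i)).symm

section MoveDollar

variable {V : Type*} [DecidableEq V] {ξ : V → ℕ}

theorem moveDollar_apply_of_ne_zero {x : V} (hx : ξ x ≠ 0) (y z : V) :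
    moveDollar ξ x y z = ξ z - (if z = x then 1 else 0) + (if z = y then 1 else 0) :=
  if_neg hx

theorem moveDollar_apply_right_ne_zero {x : V} (hx : ξ x ≠ 0) (y : V) :
    moveDollar ξ x y y ≠ 0 := by
  rw [moveDollar_apply_of_ne_zero hx]; simp

theorem moveDollar_self (ξ : V → ℕ) (x : V) : moveDollar ξ x x = ξ := by
  funext z
  unfold moveDollar
  split_ifs with hx h <;> first | rfl | (subst h; omega)

theorem moveDollar_moveDollar {x b : V} (hx : ξ x ≠ 0) (y : V) :
    moveDollar (moveDollar ξ x b) b y = moveDollar ξ x y := by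
  funext z
  simp only [moveDollar_apply_of_ne_zero (moveDollar_apply_right_ne_zero hx b),
    moveDollar_apply_of_ne_zero hx]
  by_cases hzx : z = x <;> by_cases hzb : z = b <;> simp_all

variable [Fintype V] {M : ℕ}

theorem sum_moveDollar (ξ : V → ℕ) (x y : V) : ∑ z, moveDollar ξ x y z = ∑ z, ξ z := by
  by_cases hx : ξ x = 0
  · simp [moveDollar, hx]
  have hsub : ∑ z, (ξ z - if z = x then 1 else 0) + 1 = ∑ z, ξ z := by
    have hone : ∑ z : V, (if z = x then 1 else 0) = 1 := by simp
    rw [← hone, ← sum_add_distrib]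
    refine sum_congr rfl fun z _ => ?_
    split_ifs with h
    · subst h; omega
    · rfl
  simpa [moveDollar_apply_of_ne_zero hx, sum_add_distrib] using hsub

theorem apply_le_of_mem_stateSpace (hξ : ξ ∈ stateSpace V M) (x : V) : ξ x ≤ M :=
  Nat.lt_succ_iff.1 <| mem_range.1 <| Fintype.mem_piFinset.1 (mem_filter.1 hξ).1 x

theorem mem_stateSpace_iff : ξ ∈ stateSpace V M ↔ ∑ x, ξ x = M := by
  refine ⟨fun h => (mem_filter.1 h).2,
    fun h => mem_filter.2 ⟨Fintype.mem_piFinset.2 fun x => ?_, h⟩⟩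
  have := single_le_sum (fun i _ => Nat.zero_le (ξ i)) (mem_univ x)
  rw [mem_range]
  omega

theorem moveDollar_mem_stateSpace (hξ : ξ ∈ stateSpace V M) (x y : V) :
    moveDollar ξ x y ∈ stateSpace V M := by
  rw [mem_stateSpace_iff, sum_moveDollar]
  exact mem_stateSpace_iff.1 hξ

theorem sum_tsub_moveDollar_lt {ξ' : V → ℕ} {a b : V} (ha : ξ' a < ξ a) (hb : ξ b < ξ' b) :
    ∑ z, (moveDollar ξ a b z - ξ' z) < ∑ z, (ξ z - ξ' z) := by
  have hab : a ≠ b := by rintro rfl; omega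
  simp only [moveDollar_apply_of_ne_zero (show ξ a ≠ 0 by omega)]
  refine sum_lt_sum (fun z _ => ?_) ⟨a, mem_univ a, by simp [hab]; omega⟩
  split_ifs with hza hzb hzb <;> subst_vars <;> omega

end MoveDollar

section Chain

variable {V : Type*} [Fintype V] [DecidableEq V] (G : SimpleGraph V) [DecidableRel G.Adj]
  (M : ℕ)

/-- The source must lie in `𝒜_{N,M}` since `pTwoIter` only sums over such intermediate states. -/
def ModelTwoStep (ξ η : V → ℕ) : Prop :=
  ξ ∈ stateSpace V M ∧ 0 < pTwo G M ξ η

variable {G M} {ξ ξ' : V → ℕ}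

theorem pTwo_nonneg (ξ η : V → ℕ) : 0 ≤ pTwo G M ξ η :=
  sum_nonneg fun _ _ => by positivity

theorem pTwoIter_nonneg (t : ℕ) (ξ η : V → ℕ) : 0 ≤ pTwoIter G M t ξ η := by
  induction t generalizing η with
  | zero => unfold pTwoIter; split_ifs <;> norm_num
  | succ t ih => exact sum_nonneg fun ζ _ => mul_nonneg (ih ζ) (pTwo_nonneg ζ η)

theorem pTwoIter_succ_pos {t : ℕ} {η ζ : V → ℕ} (hη : 0 < pTwoIter G M t ξ η)
    (hstep : ModelTwoStep G M η ζ) : 0 < pTwoIter G M (t + 1) ξ ζ :=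
  sum_pos' (fun _ _ => mul_nonneg (pTwoIter_nonneg t ξ _) (pTwo_nonneg _ ζ))
    ⟨η, hstep.1, mul_pos hη hstep.2⟩

theorem exists_pTwoIter_pos_of_reflTransGen (h : ReflTransGen (ModelTwoStep G M) ξ ξ') :
    ∃ t, 0 < pTwoIter G M t ξ ξ' := by
  induction h with
  | refl => exact ⟨0, by simp [pTwoIter]⟩
  | tail _ hstep ih =>
    obtain ⟨t, ht⟩ := ih
    exact ⟨t + 1, pTwoIter_succ_pos ht hstep⟩

theorem modelTwoStep_moveDollar (hξ : ξ ∈ stateSpace V M) {x y : V} (hx : ξ x ≠ 0)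
    (hxy : G.Adj x y) : ModelTwoStep G M ξ (moveDollar ξ x y) := by
  refine ⟨hξ, sum_pos' (fun _ _ => by positivity) ⟨(x, y), by simp [hxy], ?_⟩⟩
  have hξx : 0 < ξ x := Nat.pos_of_ne_zero hx
  have hM : 0 < M := hξx.trans_le (apply_le_of_mem_stateSpace hξ x)
  have hdeg : 0 < G.degree x := G.degree_pos_iff_exists_adj x |>.2 ⟨y, hxy⟩
  positivity

theorem reflTransGen_moveDollar_of_walk {x y : V} (w : G.Walk x y) (hξ : ξ ∈ stateSpace V M)
    (hx : ξ x ≠ 0) : ReflTransGen (ModelTwoStep G M) ξ (moveDollar ξ x y) := by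
  induction w generalizing ξ with
  | nil => rw [moveDollar_self]
  | cons hadj _ ih =>
    rw [← moveDollar_moveDollar hx]
    exact .head (modelTwoStep_moveDollar hξ hx hadj)
      (ih (moveDollar_mem_stateSpace hξ _ _) (moveDollar_apply_right_ne_zero hx _))

theorem reflTransGen_modelTwoStep (hG : G.Connected) (hξ : ξ ∈ stateSpace V M)
    (hξ' : ξ' ∈ stateSpace V M) : ReflTransGen (ModelTwoStep G M) ξ ξ' := by
  obtain ⟨n, hn⟩ : ∃ n, ∑ z, (ξ z - ξ' z) = n := ⟨_, rfl⟩
  induction n using Nat.strong_induction_on generalizing ξ with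
  | _ n ih =>
    by_cases heq : ξ = ξ'
    · exact heq ▸ .refl
    have hsum : ∑ z, ξ z = ∑ z, ξ' z := by
      rw [mem_stateSpace_iff.1 hξ, mem_stateSpace_iff.1 hξ']
    obtain ⟨a, ha⟩ := exists_lt_of_sum_eq_of_ne hsum.symm (Ne.symm heq)
    obtain ⟨b, hb⟩ := exists_lt_of_sum_eq_of_ne hsum heq
    obtain ⟨w⟩ := hG.preconnected a b
    exact (reflTransGen_moveDollar_of_walk w hξ (by omega)).trans
      (ih _ (hn ▸ sum_tsub_moveDollar_lt ha hb) (moveDollar_mem_stateSpace hξ a b) rfl)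

end Chain

theorem model_two_irreducible_general {V : Type*} [Fintype V] [DecidableEq V]
    (G : SimpleGraph V) [DecidableRel G.Adj] (hG : G.Connected) (M : ℕ)
    (ξ ξ' : V → ℕ) (hξ : ξ ∈ stateSpace V M) (hξ' : ξ' ∈ stateSpace V M) :
    ∃ t : ℕ, 0 < pTwoIter G M t ξ ξ' :=
  exists_pTwoIter_pos_of_reflTransGen (reflTransGen_modelTwoStep hG hξ hξ')

/-- The Model 2 Markov chain on a finite connected graph with `M ≥ 1` dollars is
irreducible on `𝒜_{N,M}`. -/
theorem model_two_irreducible {V : Type*} [Fintype V] [DecidableEq V]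
    (G : SimpleGraph V) [DecidableRel G.Adj] (hG : G.Connected) (M : ℕ) (hM : 1 ≤ M)
    (ξ ξ' : V → ℕ) (hξ : ξ ∈ stateSpace V M) (hξ' : ξ' ∈ stateSpace V M) :
    ∃ t : ℕ, 0 < pTwoIter G M t ξ ξ' :=
  model_two_irreducible_general G hG M ξ ξ' hξ hξ'
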